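/- arXiv:2506.07215 — 2 statements merged into one kernel-verified Lean document; each statement's English description precedes it below -/
import Mathlib

section
/- Let E be a smooth 3×3-matrix-valued function on ℝ³ satisfying the compatibility condition ∂_k E^{ij} + E^{lk}∂_l E^{ij} = ∂_j E^{ik} + E^{lj}∂_l E^{ik} for all i,j,k. Then ∂_j∂_k E^{ik} - ∂_i∂_k E^{jk} = Δ(E^{ij} - E^{ji}) + ∂_k(E^{lk}∂_l E^{ij} - E^{lj}∂_l E^{ik}) - ∂_k(E^{lk}∂_l E^{ji} - E^{li}∂_l E^{jk}), where summation over repeated indices is understood. -/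
/-- The `i`-th partial derivative of `f : ℝ³ → ℝ` at `x`. -/
noncomputable def pd (i : Fin 3) (f : EuclideanSpace ℝ (Fin 3) → ℝ)
    (x : EuclideanSpace ℝ (Fin 3)) : ℝ :=
  fderiv ℝ f x (EuclideanSpace.single i 1)

/-!
Write `Q^{ijk} = E^{lk}∂_l E^{ij} - E^{lj}∂_l E^{ik}`. The compatibility condition says exactly
`∂_j E^{ik} = ∂_k E^{ij} + Q^{ijk}`. Differentiating in `x_k` and commuting the second partials,
`∂_j∂_k E^{ik} = ∂_k∂_k E^{ij} + ∂_k Q^{ijk}`; subtracting the same identity with `i` and `j`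
exchanged gives the claim.
-/

open Finset

section PartialDerivatives

variable {f g : EuclideanSpace ℝ (Fin 3) → ℝ}

lemma contDiff_pd {n : ℕ} (hf : ContDiff ℝ (n + 1) f) (k : Fin 3) : ContDiff ℝ n (pd k f) :=
  (hf.fderiv_right le_rfl).clm_apply contDiff_const

lemma differentiable_pd (hf : ContDiff ℝ 2 f) (k : Fin 3) : Differentiable ℝ (pd k f) :=
  (contDiff_pd (n := 1) hf k).differentiable one_ne_zero

lemma pd_comm (hf : ContDiff ℝ 2 f) (j k : Fin 3) (x : EuclideanSpace ℝ (Fin 3)) :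
    pd j (pd k f) x = pd k (pd j f) x := by
  have hdf : Differentiable ℝ (fderiv ℝ f) :=
    (hf.fderiv_right (m := 1) (by norm_num)).differentiable one_ne_zero
  have hsymm : IsSymmSndFDerivAt ℝ f x :=
    hf.contDiffAt.isSymmSndFDerivAt (by simp [minSmoothness_of_isRCLikeNormedField])
  have pd_pd : ∀ a b : Fin 3, pd a (pd b f) x
      = fderiv ℝ (fderiv ℝ f) x (EuclideanSpace.single a 1) (EuclideanSpace.single b 1) := by
    intro a b
    unfold pd
    rw [fderiv_clm_apply (hdf x) (differentiableAt_const _)]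
    simp
  rw [pd_pd, pd_pd, hsymm.eq]

lemma pd_add {x : EuclideanSpace ℝ (Fin 3)} (hf : DifferentiableAt ℝ f x)
    (hg : DifferentiableAt ℝ g x) (k : Fin 3) :
    pd k (fun y => f y + g y) x = pd k f x + pd k g x := by
  simp only [pd, fderiv_fun_add hf hg, add_apply]

lemma pd_sub {x : EuclideanSpace ℝ (Fin 3)} (hf : DifferentiableAt ℝ f x)
    (hg : DifferentiableAt ℝ g x) (k : Fin 3) :
    pd k (fun y => f y - g y) x = pd k f x - pd k g x := by
  simp only [pd, fderiv_fun_sub hf hg, sub_apply]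

lemma pd_pd_sub (hf : ContDiff ℝ 2 f) (hg : ContDiff ℝ 2 g) (j k : Fin 3)
    (x : EuclideanSpace ℝ (Fin 3)) :
    pd j (pd k (fun y => f y - g y)) x = pd j (pd k f) x - pd j (pd k g) x := by
  have hpd : pd k (fun y => f y - g y) = fun y => pd k f y - pd k g y :=
    funext fun y => pd_sub (hf.differentiable two_ne_zero y) (hg.differentiable two_ne_zero y) k
  rw [hpd, pd_sub (differentiable_pd hf k x) (differentiable_pd hg k x)]

end PartialDerivatives

section Compatibility

variable {E : EuclideanSpace ℝ (Fin 3) → Matrix (Fin 3) (Fin 3) ℝ}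

lemma pd_entry_eq_of_compat {y : EuclideanSpace ℝ (Fin 3)} {i j k : Fin 3}
    (hcompat : pd k (fun z => E z i j) y + ∑ l, E y l k * pd l (fun z => E z i j) y
        = pd j (fun z => E z i k) y + ∑ l, E y l j * pd l (fun z => E z i k) y) :
    pd j (fun z => E z i k) y = pd k (fun z => E z i j) y
      + ∑ l, (E y l k * pd l (fun z => E z i j) y - E y l j * pd l (fun z => E z i k) y) := by
  rw [sum_sub_distrib]
  linarith

lemma pd_pd_entry_eq_of_compat (hE : ∀ i j : Fin 3, ContDiff ℝ 2 (fun x => E x i j))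
    (hcompat : ∀ x, ∀ i j k : Fin 3,
      pd k (fun y => E y i j) x + ∑ l, E x l k * pd l (fun y => E y i j) x
        = pd j (fun y => E y i k) x + ∑ l, E x l j * pd l (fun y => E y i k) x)
    (i j k : Fin 3) (x : EuclideanSpace ℝ (Fin 3)) :
    pd j (pd k (fun z => E z i k)) x
      = pd k (pd k (fun z => E z i j)) x
        + pd k (fun y =>
            ∑ l, (E y l k * pd l (fun z => E z i j) y - E y l j * pd l (fun z => E z i k) y)) x := by
  have hEd : ∀ i j : Fin 3, Differentiable ℝ (fun y => E y i j) :=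
    fun i j => (hE i j).differentiable two_ne_zero
  have hQ : DifferentiableAt ℝ (fun y =>
      ∑ l, (E y l k * pd l (fun z => E z i j) y - E y l j * pd l (fun z => E z i k) y)) x :=
    DifferentiableAt.fun_sum fun l _ =>
      ((hEd l k x).mul (differentiable_pd (hE i j) l x)).sub
        ((hEd l j x).mul (differentiable_pd (hE i k) l x))
  have hpd : pd j (fun z => E z i k) = fun y => pd k (fun z => E z i j) y
      + ∑ l, (E y l k * pd l (fun z => E z i j) y - E y l j * pd l (fun z => E z i k) y) :=
    funext fun y => pd_entry_eq_of_compat (hcompat y i j k)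
  rw [pd_comm (hE i k), hpd, pd_add (differentiable_pd (hE i j) k x) hQ]

end Compatibility

/-- If a `C²` matrix field `E` on `ℝ³` satisfies
`∂_k E^{ij} + E^{lk}∂_l E^{ij} = ∂_j E^{ik} + E^{lj}∂_l E^{ik}` for all `i,j,k`, then
`∂_j∂_k E^{ik} - ∂_i∂_k E^{jk} = Δ(E^{ij} - E^{ji})
  + ∂_k(E^{lk}∂_l E^{ij} - E^{lj}∂_l E^{ik}) - ∂_k(E^{lk}∂_l E^{ji} - E^{li}∂_l E^{jk})`
(summation over repeated indices `k, l`). -/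
theorem stmt_16 (E : EuclideanSpace ℝ (Fin 3) → Matrix (Fin 3) (Fin 3) ℝ)
    (hE : ∀ i j : Fin 3, ContDiff ℝ 2 (fun x => E x i j))
    (hcompat : ∀ x, ∀ i j k : Fin 3,
      pd k (fun y => E y i j) x + ∑ l, E x l k * pd l (fun y => E y i j) x
        = pd j (fun y => E y i k) x + ∑ l, E x l j * pd l (fun y => E y i k) x) :
    ∀ x, ∀ i j : Fin 3,
      (∑ k, pd j (fun y => pd k (fun z => E z i k) y) x)
          - (∑ k, pd i (fun y => pd k (fun z => E z j k) y) x)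
        = (∑ k, pd k (fun y => pd k (fun z => E z i j - E z j i) y) x)
          + (∑ k, pd k (fun y =>
              ∑ l, (E y l k * pd l (fun z => E z i j) y - E y l j * pd l (fun z => E z i k) y)) x)
          - (∑ k, pd k (fun y =>
              ∑ l, (E y l k * pd l (fun z => E z j i) y - E y l i * pd l (fun z => E z j k) y)) x) := by
  intro x i j
  simp only [pd_pd_entry_eq_of_compat hE hcompat, pd_pd_sub (hE i j) (hE j i),
    sum_add_distrib, sum_sub_distrib]
  ring
end

section
/- For t ≥ 2, ∫₀^{t-1} (t-s)^{-2}(1+s)^{-3/(2q)}(1 + s^{-1/2}) ds ≤ C·t^{-3/(2q)}, where 1 ≤ q ≤ 2 and C depends only on q. -/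
open Real
open MeasureTheory

set_option maxHeartbeats 1000000 in
/-- For `1 ≤ q ≤ 2` there is `C` (depending only on `q`) such that for all `t ≥ 2`,
`∫₀^{t-1} (t-s)^{-2} (1+s)^{-3/(2q)} (1 + s^{-1/2}) ds ≤ C t^{-3/(2q)}`. -/
theorem stmt_18 (q : ℝ) (hq1 : 1 ≤ q) (hq2 : q ≤ 2) :
    ∃ C : ℝ, 0 < C ∧ ∀ t : ℝ, 2 ≤ t →
      (∫ s in (0 : ℝ)..(t - 1),
          (t - s) ^ (-(2 : ℝ)) * (1 + s) ^ (-(3 / (2 * q))) * (1 + s ^ (-(1 : ℝ) / 2)))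
        ≤ C * t ^ (-(3 / (2 * q))) := by
  refine ⟨40, by norm_num, fun t ht => ?_⟩
  have hq0 : (0:ℝ) < q := by linarith
  set a : ℝ := 3 / (2 * q) with ha
  have ha34 : 3/4 ≤ a := by
    rw [ha, le_div_iff₀ (by positivity)]; nlinarith
  have ha32 : a ≤ 3/2 := by
    rw [ha, div_le_iff₀ (by positivity)]; nlinarith
  have ht0 : (0:ℝ) < t := by linarith
  have ht1 : (1:ℝ) ≤ t - 1 := by linarith
  have hT0 : (0:ℝ) ≤ t - 1 := by linarith
  set f : ℝ → ℝ := fun s => (t - s) ^ (-(2:ℝ)) * (1 + s) ^ (-a) * (1 + s ^ (-(1:ℝ)/2)) with hf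
  set g : ℝ → ℝ := fun s =>
      4 * t ^ (-(2:ℝ)) * ((1 + s) ^ (-(3/4 : ℝ)) + s ^ (-(1:ℝ)/2))
      + 2 ^ (a+1) * t ^ (-a) * (t - s) ^ (-(2:ℝ)) with hg
  -- basic integrability facts
  have hint1 : IntervalIntegrable (fun s => (1 + s) ^ (-(3/4 : ℝ))) volume 0 (t-1) := by
    apply ContinuousOn.intervalIntegrable
    apply ContinuousOn.rpow_const (by fun_prop)
    intro x hx
    rw [Set.uIcc_of_le hT0] at hx
    exact Or.inl (by nlinarith [hx.1])
  have hint2 : IntervalIntegrable (fun s => s ^ (-(1:ℝ)/2)) volume 0 (t-1) :=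
    intervalIntegral.intervalIntegrable_rpow' (by norm_num)
  have hint3 : IntervalIntegrable (fun s => (t - s) ^ (-(2:ℝ))) volume 0 (t-1) := by
    apply ContinuousOn.intervalIntegrable
    apply ContinuousOn.rpow_const (by fun_prop)
    intro x hx
    rw [Set.uIcc_of_le hT0] at hx
    exact Or.inl (by nlinarith [hx.2])
  have hintf : IntervalIntegrable f volume 0 (t-1) := by
    apply IntervalIntegrable.mono_fun ((intervalIntegrable_const (c := (1:ℝ))).add hint2)
    · apply Measurable.aestronglyMeasurable
      fun_prop
    · rw [Filter.EventuallyLE, ae_restrict_iff' measurableSet_uIoc]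
      refine Filter.Eventually.of_forall fun s hs => ?_
      rw [Set.uIoc_of_le hT0] at hs
      have hs0 : 0 < s := hs.1
      have hst : s ≤ t - 1 := hs.2
      have h1 : (t - s) ^ (-(2:ℝ)) ≤ 1 :=
        rpow_le_one_of_one_le_of_nonpos (by linarith) (by norm_num)
      have h2 : (1 + s) ^ (-a) ≤ 1 :=
        rpow_le_one_of_one_le_of_nonpos (by linarith) (by linarith)
      have h3 : (0:ℝ) ≤ (t - s) ^ (-(2:ℝ)) := rpow_nonneg (by linarith) _
      have h4 : (0:ℝ) ≤ (1 + s) ^ (-a) := rpow_nonneg (by linarith) _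
      have h5 : (0:ℝ) ≤ s ^ (-(1:ℝ)/2) := rpow_nonneg hs0.le _
      have hfs : f s ≤ 1 + s ^ (-(1:ℝ)/2) := by
        rw [hf]
        calc (t - s) ^ (-(2:ℝ)) * (1 + s) ^ (-a) * (1 + s ^ (-(1:ℝ)/2))
            ≤ 1 * 1 * (1 + s ^ (-(1:ℝ)/2)) := by
              apply mul_le_mul (mul_le_mul h1 h2 h4 zero_le_one) le_rfl (by linarith) (by norm_num)
          _ = 1 + s ^ (-(1:ℝ)/2) := by ring
      have hfs0 : 0 ≤ f s := by rw [hf]; positivity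
      simp only [Real.norm_eq_abs, abs_of_nonneg hfs0, abs_of_nonneg (by linarith : (0:ℝ) ≤ 1 + s ^ (-(1:ℝ)/2))]
      exact hfs
  have hintg1 : IntervalIntegrable
      (fun s => 4 * t ^ (-(2:ℝ)) * ((1 + s) ^ (-(3/4 : ℝ)) + s ^ (-(1:ℝ)/2))) volume 0 (t-1) :=
    (hint1.add hint2).const_mul _
  have hintg3 : IntervalIntegrable
      (fun s => 2 ^ (a+1) * t ^ (-a) * (t - s) ^ (-(2:ℝ))) volume 0 (t-1) :=
    hint3.const_mul _
  have hintg : IntervalIntegrable g volume 0 (t-1) := hintg1.add hintg3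
  -- pointwise bound f ≤ g on [0, t-1]
  have hfg : ∀ s ∈ Set.Icc (0:ℝ) (t-1), f s ≤ g s := by
    intro s hs
    have hs0 : 0 ≤ s := hs.1
    have hst : s ≤ t - 1 := hs.2
    have hts1 : 1 ≤ t - s := by linarith
    have h3 : (0:ℝ) ≤ (t - s) ^ (-(2:ℝ)) := rpow_nonneg (by linarith) _
    have h4 : (0:ℝ) ≤ (1 + s) ^ (-a) := rpow_nonneg (by linarith) _
    have h5 : (0:ℝ) ≤ s ^ (-(1:ℝ)/2) := rpow_nonneg hs0 _
    have hta : (0:ℝ) ≤ t ^ (-a) := rpow_nonneg ht0.le _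
    have ht2 : (0:ℝ) ≤ t ^ (-(2:ℝ)) := rpow_nonneg ht0.le _
    rcases le_or_gt (t/2) (t - s) with h | h
    · -- t - s large
      have key1 : (t - s) ^ (-(2:ℝ)) ≤ 4 * t ^ (-(2:ℝ)) := by
        have := rpow_le_rpow_of_nonpos (by linarith : (0:ℝ) < t/2) h (by norm_num : (-(2:ℝ)) ≤ 0)
        have heq : (t/2) ^ (-(2:ℝ)) = 4 * t ^ (-(2:ℝ)) := by
          rw [Real.div_rpow ht0.le (by norm_num)]
          rw [Real.rpow_neg (by norm_num : (0:ℝ) ≤ 2)]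
          norm_num
          rw [div_eq_mul_inv, mul_comm]
          norm_num
        linarith [this, heq ▸ this]
      have key2 : (1 + s) ^ (-a) * (1 + s ^ (-(1:ℝ)/2))
          ≤ (1 + s) ^ (-(3/4:ℝ)) + s ^ (-(1:ℝ)/2) := by
        have hb1 : (1 + s) ^ (-a) ≤ (1 + s) ^ (-(3/4:ℝ)) :=
          rpow_le_rpow_of_exponent_le (by linarith) (by linarith)
        have hb2 : (1 + s) ^ (-a) ≤ 1 :=
          rpow_le_one_of_one_le_of_nonpos (by linarith) (by linarith)
        nlinarith
      calc f s = (t - s) ^ (-(2:ℝ)) * ((1 + s) ^ (-a) * (1 + s ^ (-(1:ℝ)/2))) := by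
            rw [hf]; ring
        _ ≤ (4 * t ^ (-(2:ℝ))) * ((1 + s) ^ (-(3/4:ℝ)) + s ^ (-(1:ℝ)/2)) := by
            apply mul_le_mul key1 key2 (by positivity) (by positivity)
        _ ≤ g s := by
            rw [hg]
            have : (0:ℝ) ≤ 2 ^ (a+1) * t ^ (-a) * (t - s) ^ (-(2:ℝ)) := by positivity
            linarith
    · -- 1 + s large
      have hs1 : 1 ≤ s := by linarith
      have key1 : (1 + s) ^ (-a) ≤ 2 ^ a * t ^ (-a) := by
        have h1 : (1 + s) ^ (-a) ≤ (t/2) ^ (-a) :=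
          rpow_le_rpow_of_nonpos (by linarith) (by linarith) (by linarith)
        have heq : (t/2) ^ (-a) = 2 ^ a * t ^ (-a) := by
          rw [Real.div_rpow ht0.le (by norm_num),
            Real.rpow_neg (by norm_num : (0:ℝ) ≤ 2), div_eq_mul_inv, inv_inv, mul_comm]
        linarith [heq ▸ h1]
      have key2 : 1 + s ^ (-(1:ℝ)/2) ≤ 2 := by
        have := rpow_le_one_of_one_le_of_nonpos hs1 (by norm_num : (-(1:ℝ)/2) ≤ 0)
        linarith
      have h2a : (0:ℝ) ≤ 2 ^ a * t ^ (-a) := by positivity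
      calc f s = (t - s) ^ (-(2:ℝ)) * ((1 + s) ^ (-a) * (1 + s ^ (-(1:ℝ)/2))) := by
            rw [hf]; ring
        _ ≤ (t - s) ^ (-(2:ℝ)) * ((2 ^ a * t ^ (-a)) * 2) := by
            apply mul_le_mul_of_nonneg_left _ h3
            apply mul_le_mul key1 key2 (by positivity) h2a
        _ = 2 ^ (a+1) * t ^ (-a) * (t - s) ^ (-(2:ℝ)) := by
            rw [Real.rpow_add_one (by norm_num : (2:ℝ) ≠ 0)]; ring
        _ ≤ g s := by
            rw [hg]
            have h6 : (0:ℝ) ≤ (1 + s) ^ (-(3/4:ℝ)) := rpow_nonneg (by linarith) _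
            have : (0:ℝ) ≤ 4 * t ^ (-(2:ℝ)) * ((1 + s) ^ (-(3/4:ℝ)) + s ^ (-(1:ℝ)/2)) := by
              positivity
            linarith
  have hmono : (∫ s in (0:ℝ)..(t-1), f s) ≤ ∫ s in (0:ℝ)..(t-1), g s :=
    intervalIntegral.integral_mono_on hT0 hintf hintg hfg
  -- compute/estimate ∫ g
  have hI1 : (∫ s in (0:ℝ)..(t-1), (1 + s) ^ (-(3/4 : ℝ))) ≤ 4 * t ^ ((1:ℝ)/2) := by
    have hcomp := intervalIntegral.integral_comp_add_left (a := (0:ℝ)) (b := t-1)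
      (fun x => x ^ (-(3/4 : ℝ))) 1
    rw [show (1:ℝ) + 0 = 1 by norm_num, show (1:ℝ) + (t-1) = t by ring] at hcomp
    rw [hcomp, integral_rpow (Or.inl (by norm_num))]
    have h2 : t ^ ((1:ℝ)/4) ≤ t ^ ((1:ℝ)/2) :=
      rpow_le_rpow_of_exponent_le (by linarith) (by norm_num)
    have h3 : (1:ℝ) ^ (-(3/4:ℝ) + 1) = 1 := Real.one_rpow _
    rw [h3]
    have h4 : -(3/4:ℝ) + 1 = 1/4 := by norm_num
    rw [h4]
    have h5 : (0:ℝ) ≤ t ^ ((1:ℝ)/4) := rpow_nonneg ht0.le _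
    rw [div_le_iff₀ (by norm_num : (0:ℝ) < 1/4)] ; linarith
  have hI2 : (∫ s in (0:ℝ)..(t-1), s ^ (-(1:ℝ)/2)) ≤ 2 * t ^ ((1:ℝ)/2) := by
    rw [integral_rpow (Or.inl (by norm_num))]
    have h0 : (0:ℝ) ^ (-(1:ℝ)/2 + 1) = 0 := by
      rw [Real.zero_rpow (by norm_num)]
    rw [h0]
    have h4 : -(1:ℝ)/2 + 1 = 1/2 := by norm_num
    rw [h4]
    have h2 : (t-1) ^ ((1:ℝ)/2) ≤ t ^ ((1:ℝ)/2) :=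
      rpow_le_rpow hT0 (by linarith) (by norm_num)
    rw [sub_zero, div_le_iff₀ (by norm_num : (0:ℝ) < 1/2)]; linarith
  have hI3 : (∫ s in (0:ℝ)..(t-1), (t - s) ^ (-(2:ℝ))) ≤ 1 := by
    have hcomp := intervalIntegral.integral_comp_sub_left (a := (0:ℝ)) (b := t-1)
      (fun x => x ^ (-(2:ℝ))) t
    rw [show t - (t-1) = 1 by ring, sub_zero] at hcomp
    rw [hcomp, integral_rpow (Or.inr ⟨by norm_num, by
      rw [Set.uIcc_of_le (by linarith : (1:ℝ) ≤ t)]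
      intro hmem
      exact absurd hmem.1 (by norm_num)⟩)]
    have h1 : -(2:ℝ) + 1 = -1 := by norm_num
    rw [h1, Real.one_rpow]
    have h2 : (0:ℝ) < t ^ (-(1:ℝ)) := rpow_pos_of_pos ht0 _
    rw [div_le_iff_of_neg (by norm_num : (-1:ℝ) < 0)]
    linarith
  -- assemble
  have hsplit : (∫ s in (0:ℝ)..(t-1), g s)
      = 4 * t ^ (-(2:ℝ)) * ((∫ s in (0:ℝ)..(t-1), (1 + s) ^ (-(3/4 : ℝ)))
          + ∫ s in (0:ℝ)..(t-1), s ^ (-(1:ℝ)/2))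
        + 2 ^ (a+1) * t ^ (-a) * ∫ s in (0:ℝ)..(t-1), (t - s) ^ (-(2:ℝ)) := by
    rw [hg, intervalIntegral.integral_add hintg1 hintg3,
      intervalIntegral.integral_const_mul, intervalIntegral.integral_const_mul,
      intervalIntegral.integral_add hint1 hint2]
  have ht2pos : (0:ℝ) < t ^ (-(2:ℝ)) := rpow_pos_of_pos ht0 _
  have htapos : (0:ℝ) < t ^ (-a) := rpow_pos_of_pos ht0 _
  have h2a8 : (2:ℝ) ^ (a+1) ≤ 8 := by
    have h1 : (2:ℝ) ^ (a+1) ≤ (2:ℝ) ^ (3:ℝ) :=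
      rpow_le_rpow_of_exponent_le one_le_two (by linarith)
    have h2 : (2:ℝ) ^ (3:ℝ) = 8 := by norm_num
    linarith
  have h2apos : (0:ℝ) < (2:ℝ) ^ (a+1) := rpow_pos_of_pos (by norm_num) _
  have hkey : t ^ (-(2:ℝ)) * t ^ ((1:ℝ)/2) ≤ t ^ (-a) := by
    rw [← Real.rpow_add ht0]
    exact rpow_le_rpow_of_exponent_le (by linarith) (by linarith)
  have hgle : (∫ s in (0:ℝ)..(t-1), g s) ≤ 40 * t ^ (-a) := by
    rw [hsplit]
    have hI12 : (∫ s in (0:ℝ)..(t-1), (1 + s) ^ (-(3/4 : ℝ)))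
        + (∫ s in (0:ℝ)..(t-1), s ^ (-(1:ℝ)/2)) ≤ 6 * t ^ ((1:ℝ)/2) := by linarith
    have hI3' : 2 ^ (a+1) * t ^ (-a) * (∫ s in (0:ℝ)..(t-1), (t - s) ^ (-(2:ℝ)))
        ≤ 8 * t ^ (-a) := by
      calc 2 ^ (a+1) * t ^ (-a) * (∫ s in (0:ℝ)..(t-1), (t - s) ^ (-(2:ℝ)))
          ≤ 2 ^ (a+1) * t ^ (-a) * 1 := by
            apply mul_le_mul_of_nonneg_left hI3 (by positivity)
        _ ≤ 8 * t ^ (-a) := by nlinarith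
    have hI12' : 4 * t ^ (-(2:ℝ)) * ((∫ s in (0:ℝ)..(t-1), (1 + s) ^ (-(3/4 : ℝ)))
        + ∫ s in (0:ℝ)..(t-1), s ^ (-(1:ℝ)/2)) ≤ 32 * t ^ (-a) := by
      calc 4 * t ^ (-(2:ℝ)) * ((∫ s in (0:ℝ)..(t-1), (1 + s) ^ (-(3/4 : ℝ)))
            + ∫ s in (0:ℝ)..(t-1), s ^ (-(1:ℝ)/2))
          ≤ 4 * t ^ (-(2:ℝ)) * (6 * t ^ ((1:ℝ)/2)) := by
            apply mul_le_mul_of_nonneg_left hI12 (by positivity)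
        _ = 24 * (t ^ (-(2:ℝ)) * t ^ ((1:ℝ)/2)) := by ring
        _ ≤ 24 * t ^ (-a) := by linarith
        _ ≤ 32 * t ^ (-a) := by linarith
    linarith
  calc (∫ s in (0:ℝ)..(t-1), f s) ≤ ∫ s in (0:ℝ)..(t-1), g s := hmono
    _ ≤ 40 * t ^ (-a) := hgle
end
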